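/- Let S ⊆ (Fin n → ℝ) be finite, P = convexHull ℝ S with at least two extreme points, let V be an extreme point of P, and let P₁ = {p − V : p ∈ P}. Suppose c : Fin n → ℝ satisfies c·x ≤ 0 for all x ∈ P₁ and {x ∈ P₁ : c·x = 0} = {0}, and suppose α < 0 satisfies c·(W − V) < α for every extreme point W ≠ V of P. Let K_V be the convex cone generated by the vertex vectors at V and let P' = P₁ ∩ {x : c·x = α}. Then P' is a convex base of K_V: P' is convex, P' ⊆ K_V, 0 ∉ P', and for every u ∈ K_V with u ≠ 0 there exist a unique t > 0 and a unique v ∈ P' with u = t • v. -/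

import Mathlib

/-
A point `p` of `P` is a convex combination of the vertices, so `p - V` is a nonnegative
combination of the edge vectors `W - V`; hence `P - V ⊆ K_V`. Conversely, a nonzero
`u = ∑ r_W (W - V) ∈ K_V` has total weight `s = ∑ r_W > 0` and `c·u ≤ s α < 0`; on the
hyperplane `c·u = α` this forces `s ≤ 1`, so `u` is a convex combination of `0` and the
`W - V` and lies in `P - V`. Thus `P' = K_V ∩ {c·x = α}`, and every nonzero `u ∈ K_V` is
`t • v` with `t = c·u / α` and `v = t⁻¹ • u ∈ P'`.
-/

/-- The convex cone `K_V` generated by the vertex vectors at `V`: all finite nonnegative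
combinations `∑_W r_W • (W − V)`, `W` ranging over the extreme points of `P` other than `V`. -/
def Kcone {n : ℕ} (P : Set (Fin n → ℝ)) (V : Fin n → ℝ) : Set (Fin n → ℝ) :=
  {x | ∃ r : (Fin n → ℝ) →₀ ℝ, (∀ W, 0 ≤ r W) ∧
    (∀ W ∈ r.support, W ∈ Set.extremePoints ℝ P ∧ W ≠ V) ∧
    x = r.sum (fun W c => c • (W - V))}

open Set

section Convex

variable {𝕜 E ι : Type*} [Field 𝕜] [LinearOrder 𝕜] [IsStrictOrderedRing 𝕜]
  [AddCommGroup E] [Module 𝕜 E]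

theorem Convex.sum_smul_mem_of_sum_le_one {s : Set E} (hs : Convex 𝕜 s) (h0 : (0 : E) ∈ s)
    {t : Finset ι} {w : ι → 𝕜} {z : ι → E} (hw₀ : ∀ i ∈ t, 0 ≤ w i)
    (hw₁ : ∑ i ∈ t, w i ≤ 1) (hz : ∀ i ∈ t, z i ∈ s) : ∑ i ∈ t, w i • z i ∈ s := by
  rcases (Finset.sum_nonneg hw₀).eq_or_lt with hsum | hsum
  · have hw : ∀ i ∈ t, w i = 0 := (Finset.sum_eq_zero_iff_of_nonneg hw₀).1 hsum.symm
    rwa [Finset.sum_eq_zero fun i hi => by rw [hw i hi, zero_smul]]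
  · have hcm : (∑ i ∈ t, w i) • t.centerMass w z = ∑ i ∈ t, w i • z i :=
      smul_inv_smul₀ hsum.ne' _
    rw [← hcm]
    exact hs.smul_mem_of_zero_mem h0 (hs.centerMass_mem hw₀ hsum hz) ⟨hsum.le, hw₁⟩

end Convex

theorem Set.Finite.convexHull_extremePoints_convexHull {E : Type*} [NormedAddCommGroup E]
    [NormedSpace ℝ E] {S : Set E} (hS : S.Finite) :
    convexHull ℝ (extremePoints ℝ (convexHull ℝ S)) = convexHull ℝ S := by
  have hfin : (extremePoints ℝ (convexHull ℝ S)).Finite :=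
    hS.subset extremePoints_convexHull_subset
  simpa only [(hfin.isClosed_convexHull ℝ).closure_eq] using
    closure_convexHull_extremePoints (hS.isCompact_convexHull ℝ) (convex_convexHull ℝ S)

theorem existsUnique_pos_smul_mem_inter_hyperplane {E : Type*} [AddCommGroup E] [Module ℝ E]
    {K : Set E} (hK : ∀ t : ℝ, 0 ≤ t → ∀ u ∈ K, t • u ∈ K) (f : E →ₗ[ℝ] ℝ) {α : ℝ}
    (hα : α < 0) {u : E} (hu : u ∈ K) (hfu : f u < 0) :
    ∃! tv : ℝ × E, 0 < tv.1 ∧ tv.2 ∈ K ∩ {x | f x = α} ∧ u = tv.1 • tv.2 := by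
  have hpos : 0 < f u / α := div_pos_of_neg_of_neg hfu hα
  refine ⟨(f u / α, (f u / α)⁻¹ • u), ⟨hpos, ⟨hK _ (inv_nonneg.2 hpos.le) u hu, ?_⟩,
    (smul_inv_smul₀ hpos.ne' u).symm⟩, ?_⟩
  · simp only [mem_ofPred_eq, map_smul, smul_eq_mul, inv_div, div_mul_cancel₀ α hfu.ne]
  · rintro ⟨t, v⟩ ⟨ht, ⟨-, hfv⟩, rfl⟩
    have htv : f (t • v) / α = t := by
      rw [map_smul, hfv, smul_eq_mul, mul_div_cancel_right₀ t hα.ne]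
    simp only [htv, inv_smul_smul₀ (show t ≠ 0 from ht.ne')]

section Kcone

variable {n : ℕ} {P : Set (Fin n → ℝ)} {V : Fin n → ℝ}

theorem zero_mem_Kcone : (0 : Fin n → ℝ) ∈ Kcone P V :=
  ⟨0, fun _ => le_rfl, by simp, by simp⟩

theorem sub_mem_Kcone {W : Fin n → ℝ} (hW : W ∈ extremePoints ℝ P) (hWV : W ≠ V) :
    W - V ∈ Kcone P V := by
  refine ⟨Finsupp.single W 1, fun _ => ?_, fun X hX => ?_, by simp⟩
  · rw [Finsupp.single_apply]; split_ifs <;> norm_num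
  · rw [Finsupp.support_single _ one_ne_zero, Finset.mem_singleton] at hX
    exact hX ▸ ⟨hW, hWV⟩

theorem add_mem_Kcone {u v : Fin n → ℝ} (hu : u ∈ Kcone P V) (hv : v ∈ Kcone P V) :
    u + v ∈ Kcone P V := by
  obtain ⟨r, hr0, hrs, rfl⟩ := hu
  obtain ⟨q, hq0, hqs, rfl⟩ := hv
  classical
  refine ⟨r + q, fun W => add_nonneg (hr0 W) (hq0 W), fun W hW => ?_, ?_⟩
  · rcases Finset.mem_union.1 (Finsupp.support_add hW) with h | h
    exacts [hrs W h, hqs W h]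
  · exact (Finsupp.sum_add_index' (h := fun W c => c • (W - V)) (fun _ => zero_smul ℝ _)
      fun _ _ _ => add_smul _ _ _).symm

theorem smul_mem_Kcone {t : ℝ} (ht : 0 ≤ t) {u : Fin n → ℝ} (hu : u ∈ Kcone P V) :
    t • u ∈ Kcone P V := by
  obtain ⟨r, hr0, hrs, rfl⟩ := hu
  refine ⟨t • r, fun W => mul_nonneg ht (hr0 W), fun W hW => hrs W (Finsupp.support_smul hW),
    ?_⟩
  rw [Finsupp.sum_smul_index' fun W => zero_smul ℝ (W - V), Finsupp.smul_sum]
  exact Finsupp.sum_congr fun W _ => (smul_assoc t _ _).symm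

theorem convex_Kcone : Convex ℝ (Kcone P V) := fun _ hu _ hv _ _ ha hb _ =>
  add_mem_Kcone (smul_mem_Kcone ha hu) (smul_mem_Kcone hb hv)

theorem sub_mem_Kcone_of_mem_convexHull {p : Fin n → ℝ}
    (hp : p ∈ convexHull ℝ (extremePoints ℝ P)) : p - V ∈ Kcone P V := by
  have hconv : Convex ℝ ((fun x => x - V) ⁻¹' Kcone P V) := by
    simpa only [← sub_eq_add_neg] using convex_Kcone.translate_preimage_left (-V)
  refine convexHull_min (fun W hW => ?_) hconv hp
  rcases eq_or_ne W V with rfl | hWV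
  · simpa using zero_mem_Kcone
  · exact sub_mem_Kcone hW hWV

variable {f : (Fin n → ℝ) →ₗ[ℝ] ℝ} {α : ℝ}

theorem apply_sum_le_of_apply_sub_le (hf : ∀ W ∈ extremePoints ℝ P, W ≠ V → f (W - V) ≤ α)
    {r : (Fin n → ℝ) →₀ ℝ} (hr0 : ∀ W, 0 ≤ r W)
    (hrs : ∀ W ∈ r.support, W ∈ extremePoints ℝ P ∧ W ≠ V) :
    f (r.sum fun W c => c • (W - V)) ≤ (∑ W ∈ r.support, r W) * α := by
  rw [map_finsuppSum, Finsupp.sum, Finset.sum_mul]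
  refine Finset.sum_le_sum fun W hW => ?_
  rw [map_smul, smul_eq_mul]
  exact mul_le_mul_of_nonneg_left (hf W (hrs W hW).1 (hrs W hW).2) (hr0 W)

theorem apply_neg_of_mem_Kcone (hα : α < 0)
    (hf : ∀ W ∈ extremePoints ℝ P, W ≠ V → f (W - V) ≤ α) {u : Fin n → ℝ}
    (hu : u ∈ Kcone P V) (hu0 : u ≠ 0) : f u < 0 := by
  obtain ⟨r, hr0, hrs, rfl⟩ := hu
  obtain ⟨W, hW⟩ : r.support.Nonempty := by
    rw [Finset.nonempty_iff_ne_empty, Ne, Finsupp.support_eq_empty]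
    rintro rfl
    exact hu0 Finsupp.sum_zero_index
  have hs : 0 < ∑ W ∈ r.support, r W :=
    Finset.sum_pos' (fun W _ => hr0 W)
      ⟨W, hW, (hr0 W).lt_of_ne (Finsupp.mem_support_iff.1 hW).symm⟩
  exact (apply_sum_le_of_apply_sub_le hf hr0 hrs).trans_lt (mul_neg_of_pos_of_neg hs hα)

theorem mem_image_sub_of_mem_Kcone (hP : Convex ℝ P) (hV : V ∈ P) (hα : α < 0)
    (hf : ∀ W ∈ extremePoints ℝ P, W ≠ V → f (W - V) ≤ α) {u : Fin n → ℝ}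
    (hu : u ∈ Kcone P V) (hfu : α ≤ f u) : u ∈ (fun p => p - V) '' P := by
  obtain ⟨r, hr0, hrs, rfl⟩ := hu
  have hs : ∑ W ∈ r.support, r W ≤ 1 := by
    nlinarith [apply_sum_le_of_apply_sub_le hf hr0 hrs]
  have hconv : Convex ℝ ((fun p => p - V) '' P) := by
    simpa only [neg_add_eq_sub] using hP.translate (-V)
  refine hconv.sum_smul_mem_of_sum_le_one ⟨V, hV, sub_self V⟩ (fun W _ => hr0 W) hs
    fun W hW => ⟨W, (hrs W hW).1.1, rfl⟩

end Kcone

theorem stmt_19_general (n : ℕ) (S : Set (Fin n → ℝ)) (hSf : S.Finite)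
    (P : Set (Fin n → ℝ)) (hP : P = convexHull ℝ S)
    (V : Fin n → ℝ) (hV : V ∈ Set.extremePoints ℝ P)
    (P₁ : Set (Fin n → ℝ)) (hP₁ : P₁ = (fun p => p - V) '' P)
    (c : Fin n → ℝ)
    (α : ℝ) (hα : α < 0)
    (hαlt : ∀ W ∈ Set.extremePoints ℝ P, W ≠ V → (∑ i, c i * (W i - V i)) < α)
    (K : Set (Fin n → ℝ)) (hK : K = Kcone P V)
    (P' : Set (Fin n → ℝ)) (hP' : P' = P₁ ∩ {x | (∑ i, c i * x i) = α}) :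
    Convex ℝ P' ∧ P' ⊆ K ∧ (0 : Fin n → ℝ) ∉ P' ∧
      ∀ u ∈ K, u ≠ 0 →
        ∃! tv : ℝ × (Fin n → ℝ), 0 < tv.1 ∧ tv.2 ∈ P' ∧ u = tv.1 • tv.2 := by
  subst hP₁ hK hP'
  -- `f x = c ⬝ᵥ x` unfolds definitionally to `∑ i, c i * x i`.
  let f := dotProductBilin ℝ ℝ c
  have hf : ∀ W ∈ extremePoints ℝ P, W ≠ V → f (W - V) ≤ α := fun W hW hWV =>
    (hαlt W hW hWV).le
  have hPK : (fun p => p - V) '' P ⊆ Kcone P V := by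
    rintro _ ⟨p, hp, rfl⟩
    rw [hP, ← hSf.convexHull_extremePoints_convexHull, ← hP] at hp
    exact sub_mem_Kcone_of_mem_convexHull hp
  have hbase : (fun p => p - V) '' P ∩ {x | ∑ i, c i * x i = α} = Kcone P V ∩ {x | f x = α} :=
    subset_antisymm (inter_subset_inter_left _ hPK) fun u ⟨hu, hfu⟩ =>
      ⟨mem_image_sub_of_mem_Kcone (hP ▸ convex_convexHull ℝ S) hV.1 hα hf hu hfu.ge, hfu⟩
  rw [hbase]
  refine ⟨convex_Kcone.inter (convex_hyperplane f.isLinear α), inter_subset_left,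
    fun h => hα.ne (h.2.symm.trans (map_zero f)), fun u hu hu0 =>
    existsUnique_pos_smul_mem_inter_hyperplane (fun _ ht _ => smul_mem_Kcone ht) f hα hu
      (apply_neg_of_mem_Kcone hα hf hu hu0)⟩

/-- The vertex figure `P' = P₁ ∩ {x | c·x = α}` of the translated polytope
`P₁ = P − V` at the vertex `V` is a convex base of the cone `K_V`. -/
theorem stmt_19 (n : ℕ) (S : Set (Fin n → ℝ)) (hSf : S.Finite)
    (P : Set (Fin n → ℝ)) (hP : P = convexHull ℝ S)
    (h2 : ∃ V W : Fin n → ℝ, V ∈ Set.extremePoints ℝ P ∧ W ∈ Set.extremePoints ℝ P ∧ V ≠ W)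
    (V : Fin n → ℝ) (hV : V ∈ Set.extremePoints ℝ P)
    (P₁ : Set (Fin n → ℝ)) (hP₁ : P₁ = (fun p => p - V) '' P)
    (c : Fin n → ℝ)
    (hc1 : ∀ x ∈ P₁, (∑ i, c i * x i) ≤ 0)
    (hc2 : {x ∈ P₁ | (∑ i, c i * x i) = 0} = {(0 : Fin n → ℝ)})
    (α : ℝ) (hα : α < 0)
    (hαlt : ∀ W ∈ Set.extremePoints ℝ P, W ≠ V → (∑ i, c i * (W i - V i)) < α)
    (K : Set (Fin n → ℝ)) (hK : K = Kcone P V)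
    (P' : Set (Fin n → ℝ)) (hP' : P' = P₁ ∩ {x | (∑ i, c i * x i) = α}) :
    Convex ℝ P' ∧ P' ⊆ K ∧ (0 : Fin n → ℝ) ∉ P' ∧
      ∀ u ∈ K, u ≠ 0 →
        ∃! tv : ℝ × (Fin n → ℝ), 0 < tv.1 ∧ tv.2 ∈ P' ∧ u = tv.1 • tv.2 :=
  stmt_19_general n S hSf P hP V hV P₁ hP₁ c α hα hαlt K hK P' hP'
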